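/- arXiv:1912.13383 — 2 statements merged into one kernel-verified Lean document; each statement's English description precedes it below -/
import Mathlib

section
/- Normalized direct-sum uncertainty relation: Let {M_a}_{a=1}^n and {N_b}_{b=1}^m be POVMs on C^d, and for k = 1,…,n+m set S_k(1/2) = max over I ⊆ {1,…,n}, J ⊆ {1,…,m} with |I| + |J| = k of λ₁( (1/2) Σ_{a∈I} M_a + (1/2) Σ_{b∈J} N_b ). Then for every density matrix ρ with outcome distributions p_a = Tr(M_a ρ) and q_b = Tr(N_b ρ), and for every k, the sum of the k largest entries of the concatenated vector p ⊕ q is at most 2·S_k(1/2). -/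
/-!
For Hermitian `A` and a density matrix `ρ`, `Re Tr(A ρ) ≤ λ₁(A)`: the matrix `λ₁(A) • 1 - A` is
positive semidefinite, and the trace of a product of positive semidefinite matrices is
nonnegative. Any `k` entries of `p ⊕ q` are indexed by sets `I`, `J` with `|I| + |J| = k`, and
their sum is `2 Re Tr(A ρ)` for `A = ½ Σ_{a∈I} M_a + ½ Σ_{b∈J} N_b`, hence at most `2 λ₁(A)`.
-/

open scoped BigOperators ComplexOrder

/-- Sum of the `k` largest entries of `x`: the maximum of `∑ i ∈ s, x i`
over all `k`-element index sets `s`. -/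
noncomputable def kMaxSum {ι : Type*} [Fintype ι] (x : ι → ℝ) (k : ℕ) : ℝ :=
  sSup {t : ℝ | ∃ s : Finset ι, s.card = k ∧ t = ∑ i ∈ s, x i}

/-- The largest eigenvalue `λ₁(A)` of a (Hermitian) matrix `A`: the supremum of the real
points of its spectrum. -/
noncomputable def maxEig {d : ℕ} (A : Matrix (Fin d) (Fin d) ℂ) : ℝ :=
  sSup {t : ℝ | (t : ℂ) ∈ spectrum ℂ A}

/-- `S_k(l)`: the maximum over index sets `I`, `J` with `|I| + |J| = k` of the largest
eigenvalue of `l Σ_{a∈I} M_a + (1−l) Σ_{b∈J} N_b`. -/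
noncomputable def Sval {d n m : ℕ} (M : Fin n → Matrix (Fin d) (Fin d) ℂ)
    (N : Fin m → Matrix (Fin d) (Fin d) ℂ) (l : ℝ) (k : ℕ) : ℝ :=
  sSup {t : ℝ | ∃ (I : Finset (Fin n)) (J : Finset (Fin m)), I.card + J.card = k ∧
    t = maxEig ((l : ℂ) • (∑ a ∈ I, M a) + ((1 - l : ℝ) : ℂ) • (∑ b ∈ J, N b))}

open scoped MatrixOrder

theorem Matrix.PosSemidef.trace_mul_nonneg {𝕜 n : Type*} [RCLike 𝕜] [Fintype n] [DecidableEq n]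
    {A B : Matrix n n 𝕜} (hA : A.PosSemidef) (hB : B.PosSemidef) : 0 ≤ (A * B).trace := by
  obtain ⟨C, rfl⟩ := CStarAlgebra.nonneg_iff_eq_star_mul_self.mp hB.nonneg
  rw [← Matrix.mul_assoc, Matrix.trace_mul_comm, ← Matrix.mul_assoc, Matrix.star_eq_conjTranspose]
  exact (hA.mul_mul_conjTranspose_same C).trace_nonneg

theorem maxEig_eq_sSup_spectrum {d : ℕ} (A : Matrix (Fin d) (Fin d) ℂ) :
    maxEig A = sSup (spectrum ℝ A) := by
  rw [maxEig, ← spectrum.preimage_algebraMap ℂ]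
  rfl

theorem le_maxEig_of_mem_spectrum {d : ℕ} {A : Matrix (Fin d) (Fin d) ℂ} {x : ℝ}
    (hx : x ∈ spectrum ℝ A) : x ≤ maxEig A :=
  maxEig_eq_sSup_spectrum A ▸ le_csSup A.finite_real_spectrum.bddAbove hx

theorem re_trace_mul_le_maxEig {d : ℕ} {A ρ : Matrix (Fin d) (Fin d) ℂ} (hA : A.IsHermitian)
    (hρ : ρ.PosSemidef) (hρ1 : ρ.trace = 1) : (A * ρ).trace.re ≤ maxEig A := by
  have hgap : (algebraMap ℝ _ (maxEig A) - A).PosSemidef :=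
    Matrix.le_iff.mp (le_algebraMap_of_spectrum_le (fun _ => le_maxEig_of_mem_spectrum)
      hA.isSelfAdjoint)
  have h := (Complex.le_def.mp (hgap.trace_mul_nonneg hρ)).1
  rw [Matrix.sub_mul, Matrix.trace_sub, Algebra.algebraMap_eq_smul_one, Matrix.smul_mul,
    Matrix.one_mul, Matrix.trace_smul, hρ1] at h
  simpa using h

theorem kMaxSum_le {ι : Type*} [Fintype ι] {x : ι → ℝ} {k : ℕ} {C : ℝ}
    (hk : k ≤ Fintype.card ι) (h : ∀ s : Finset ι, s.card = k → ∑ i ∈ s, x i ≤ C) :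
    kMaxSum x k ≤ C := by
  obtain ⟨s, -, hs⟩ := Finset.exists_subset_card_eq (s := Finset.univ) (n := k) hk
  refine csSup_le ⟨_, s, hs, rfl⟩ ?_
  rintro t ⟨s, hs, rfl⟩
  exact h s hs

theorem Finset.exists_sum_fin_append_eq {α : Type*} [AddCommMonoid α] {n m : ℕ}
    (f : Fin n → α) (g : Fin m → α) (s : Finset (Fin (n + m))) :
    ∃ (I : Finset (Fin n)) (J : Finset (Fin m)),
      I.card + J.card = s.card ∧ ∑ i ∈ s, Fin.append f g i = ∑ a ∈ I, f a + ∑ b ∈ J, g b := by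
  classical
  set u := s.map finSumFinEquiv.symm.toEmbedding
  refine ⟨u.toLeft, u.toRight, by rw [Finset.card_toLeft_add_card_toRight, Finset.card_map], ?_⟩
  have hs : ∑ i ∈ s, Fin.append f g i = ∑ x ∈ u, Fin.append f g (finSumFinEquiv x) := by
    simp [u, Finset.sum_map]
  rw [hs, ← u.toLeft_disjSum_toRight, Finset.sum_disjSum]
  simp

noncomputable def weightedEffect {d n m : ℕ} (M : Fin n → Matrix (Fin d) (Fin d) ℂ)
    (N : Fin m → Matrix (Fin d) (Fin d) ℂ) (l : ℝ) (I : Finset (Fin n)) (J : Finset (Fin m)) :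
    Matrix (Fin d) (Fin d) ℂ :=
  (l : ℂ) • (∑ a ∈ I, M a) + ((1 - l : ℝ) : ℂ) • (∑ b ∈ J, N b)

section weightedEffect

variable {d n m : ℕ} {M : Fin n → Matrix (Fin d) (Fin d) ℂ} {N : Fin m → Matrix (Fin d) (Fin d) ℂ}

theorem maxEig_weightedEffect_le_Sval (l : ℝ) {k : ℕ} {I : Finset (Fin n)} {J : Finset (Fin m)}
    (hIJ : I.card + J.card = k) : maxEig (weightedEffect M N l I J) ≤ Sval M N l k := by
  refine le_csSup (Set.Finite.bddAbove ?_) ⟨I, J, hIJ, rfl⟩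
  refine (Set.finite_range fun p : Finset (Fin n) × Finset (Fin m) =>
    maxEig (weightedEffect M N l p.1 p.2)).subset ?_
  rintro t ⟨I', J', -, rfl⟩
  exact ⟨(I', J'), rfl⟩

theorem isHermitian_weightedEffect (hM : ∀ a, (M a).IsHermitian) (hN : ∀ b, (N b).IsHermitian)
    (l : ℝ) (I : Finset (Fin n)) (J : Finset (Fin m)) :
    (weightedEffect M N l I J).IsHermitian :=
  .add (.smul (isSelfAdjoint_sum I fun a _ => hM a) (Complex.conj_ofReal l))
    (.smul (isSelfAdjoint_sum J fun b _ => hN b) (Complex.conj_ofReal (1 - l)))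

theorem re_trace_weightedEffect_mul (ρ : Matrix (Fin d) (Fin d) ℂ) (l : ℝ)
    (I : Finset (Fin n)) (J : Finset (Fin m)) :
    (weightedEffect M N l I J * ρ).trace.re =
      l * ∑ a ∈ I, (M a * ρ).trace.re + (1 - l) * ∑ b ∈ J, (N b * ρ).trace.re := by
  simp only [weightedEffect, Matrix.add_mul, Matrix.smul_mul, Matrix.trace_add,
    Matrix.trace_smul, Matrix.sum_mul, Matrix.trace_sum, smul_eq_mul, Complex.add_re,
    Complex.re_ofReal_mul, Complex.re_sum]

end weightedEffect

theorem normalized_dsmur_general {d n m : ℕ}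
    (M : Fin n → Matrix (Fin d) (Fin d) ℂ)
    (hMpos : ∀ a, (M a).PosSemidef)
    (N : Fin m → Matrix (Fin d) (Fin d) ℂ)
    (hNpos : ∀ b, (N b).PosSemidef)
    (ρ : Matrix (Fin d) (Fin d) ℂ) (hρ : ρ.PosSemidef) (hρ1 : ρ.trace = 1) :
    ∀ k ≤ n + m,
      kMaxSum (Fin.append (fun a => ((M a * ρ).trace).re)
          (fun b => ((N b * ρ).trace).re)) k
        ≤ 2 * Sval M N (1 / 2) k := by
  intro k hk
  refine kMaxSum_le (by simpa using hk) fun s hs => ?_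
  obtain ⟨I, J, hIJ, hsum⟩ := Finset.exists_sum_fin_append_eq
    (fun a => ((M a * ρ).trace).re) (fun b => ((N b * ρ).trace).re) s
  have hA := isHermitian_weightedEffect (fun a => (hMpos a).isHermitian)
    (fun b => (hNpos b).isHermitian) (1 / 2) I J
  calc ∑ i ∈ s, _ = 2 * (weightedEffect M N (1 / 2) I J * ρ).trace.re := by
        rw [hsum, re_trace_weightedEffect_mul]; ring
    _ ≤ 2 * maxEig (weightedEffect M N (1 / 2) I J) := by
        gcongr; exact re_trace_mul_le_maxEig hA hρ hρ1
    _ ≤ 2 * Sval M N (1 / 2) k := by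
        gcongr; exact maxEig_weightedEffect_le_Sval _ (hs ▸ hIJ)

/-- Normalized direct-sum uncertainty relation: for every density matrix `ρ` and every
`k = 1, …, n + m`, the sum of the `k` largest entries of the concatenation `p ⊕ q` of the
two outcome distributions is at most `2·S_k(1/2)`. -/
theorem normalized_dsmur {d n m : ℕ}
    (M : Fin n → Matrix (Fin d) (Fin d) ℂ)
    (hMpos : ∀ a, (M a).PosSemidef) (hMsum : ∑ a, M a = 1)
    (N : Fin m → Matrix (Fin d) (Fin d) ℂ)
    (hNpos : ∀ b, (N b).PosSemidef) (hNsum : ∑ b, N b = 1)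
    (ρ : Matrix (Fin d) (Fin d) ℂ) (hρ : ρ.PosSemidef) (hρ1 : ρ.trace = 1) :
    ∀ k ≤ n + m,
      kMaxSum (Fin.append (fun a => ((M a * ρ).trace).re)
          (fun b => ((N b * ρ).trace).re)) k
        ≤ 2 * Sval M N (1 / 2) k :=
  normalized_dsmur_general M hMpos N hNpos ρ hρ hρ1
end

section
/- Comparison of direct-sum and direct-product bounds under the Shannon entropy: Let x ∈ R^{nm} be a probability vector with non-increasing entries and let y ∈ R^{n+m} be a vector with nonnegative non-increasing entries summing to 2. If y ≺ (1) ⊕ x, i.e., for every k the sum of the first k entries of y is at most the sum of the first k entries of the vector (1, x_1, …, x_{nm}), then H(y) ≥ H(x), where H(u) = −Σ_i u_i log u_i with 0·log 0 = 0. -/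
open scoped BigOperators

/-- Sum of the first `k` entries of `x` (in the given order). -/
def partialSum {n : ℕ} (x : Fin n → ℝ) (k : ℕ) : ℝ :=
  ∑ i : Fin n, if (i : ℕ) < k then x i else 0

/-- The (extended, unnormalized) Shannon entropy `H(u) = −Σ_i u_i log u_i`,
with the convention `0 · log 0 = 0` (note `Real.log 0 = 0`). -/
noncomputable def shannonH {ι : Type*} [Fintype ι] (u : ι → ℝ) : ℝ :=
  -∑ i, u i * Real.log (u i)

open Finset

def extv {len : ℕ} (v : Fin len → ℝ) : ℕ → ℝ :=
  fun i => if h : i < len then v ⟨i, h⟩ else 0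

lemma dsum {len : ℕ} (N : ℕ) (h : len ≤ N) (w : Fin len → ℝ) :
    ∑ i ∈ range N, (if h' : i < len then w ⟨i, h'⟩ else 0) = ∑ j, w j := by
  rw [← Finset.sum_subset (Finset.range_subset_range.mpr h)
    (fun i _ hil => dif_neg (by simpa using hil))]
  rw [← Fin.sum_univ_eq_sum_range (fun i => if h' : i < len then w ⟨i, h'⟩ else 0) len]
  exact Finset.sum_congr rfl (fun j _ => by simp)

lemma extsum {len : ℕ} (v : Fin len → ℝ) (k : ℕ) :
    ∑ i ∈ range k, extv v i = partialSum v k := by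
  set M := max k len with hM
  have h1 : ∑ i ∈ range k, extv v i = ∑ i ∈ range M, if i < k then extv v i else 0 := by
    rw [← Finset.sum_subset (Finset.range_subset_range.mpr (le_max_left k len))
      (fun i _ hik => if_neg (by simpa using hik))]
    exact Finset.sum_congr rfl (fun i hi => (if_pos (Finset.mem_range.mp hi)).symm)
  have h2 : partialSum v k = ∑ i ∈ range len, if i < k then extv v i else 0 := by
    unfold partialSum
    rw [← Fin.sum_univ_eq_sum_range (fun i => if i < k then extv v i else 0) len]
    apply Finset.sum_congr rfl
    intro j _
    by_cases hik : (j : ℕ) < k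
    · rw [if_pos hik, if_pos hik]
      unfold extv
      rw [dif_pos j.isLt]
    · rw [if_neg hik, if_neg hik]
  have h3 : ∑ i ∈ range len, (if i < k then extv v i else 0)
      = ∑ i ∈ range M, if i < k then extv v i else 0 := by
    apply Finset.sum_subset (Finset.range_subset_range.mpr (le_max_right k len))
    intro i _ hil
    have hil' : ¬ i < len := by simpa using hil
    by_cases hik : i < k
    · rw [if_pos hik]; exact dif_neg hil'
    · exact if_neg hik
  rw [h1, h2, h3]

lemma gibbs_pt {a b : ℝ} (ha : 0 < a) (hb : 0 ≤ b) :
    a * Real.log a - b * Real.log b ≤ (-(1 + Real.log a)) * (b - a) := by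
  rcases eq_or_lt_of_le hb with h0 | hbpos
  · rw [← h0]; simp; nlinarith [ha.le]
  · have h := Real.log_le_sub_one_of_pos (show (0:ℝ) < a / b from div_pos ha hbpos)
    rw [Real.log_div (ne_of_gt ha) (ne_of_gt hbpos)] at h
    have hmul := mul_le_mul_of_nonneg_left h hbpos.le
    have hcancel : b * (a / b) = a := mul_div_cancel₀ a (ne_of_gt hbpos)
    nlinarith [hmul, hcancel]

lemma key (N : ℕ) (Y Z : ℕ → ℝ) (hY0 : ∀ i, 0 ≤ Y i) (hZ0 : ∀ i, 0 ≤ Z i)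
    (hYa : Antitone Y)
    (hmaj : ∀ k, k ≤ N → ∑ i ∈ range k, Y i ≤ ∑ i ∈ range k, Z i)
    (hsum : ∑ i ∈ range N, Y i = ∑ i ∈ range N, Z i) :
    ∑ i ∈ range N, Y i * Real.log (Y i) ≤ ∑ i ∈ range N, Z i * Real.log (Z i) := by
  have stepA : ∀ k, k ≤ N → Y k = 0 →
      (∀ j, k ≤ j → j < N → Z j = 0) ∧ ∑ i ∈ range k, Y i = ∑ i ∈ range k, Z i := by
    intro k hkN hYk
    have hYtail : ∀ j, k ≤ j → Y j = 0 :=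
      fun j hj => le_antisymm (hYk ▸ hYa hj) (hY0 j)
    have hYsplit : ∑ i ∈ range N, Y i = ∑ i ∈ range k, Y i := by
      rw [← Finset.sum_range_add_sum_Ico Y hkN]
      have : ∑ i ∈ Ico k N, Y i = 0 :=
        Finset.sum_eq_zero (fun i hi => hYtail i (Finset.mem_Ico.mp hi).1)
      rw [this, add_zero]
    have hZsplit : ∑ i ∈ range N, Z i = ∑ i ∈ range k, Z i + ∑ i ∈ Ico k N, Z i :=
      (Finset.sum_range_add_sum_Ico Z hkN).symm
    have hZIco_nonneg : 0 ≤ ∑ i ∈ Ico k N, Z i :=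
      Finset.sum_nonneg (fun i _ => hZ0 i)
    have hZIco : ∑ i ∈ Ico k N, Z i = 0 := by
      have h1 := hmaj k hkN
      linarith [hYsplit ▸ hsum]
    constructor
    · intro j hkj hjN
      exact (Finset.sum_eq_zero_iff_of_nonneg (fun i _ => hZ0 i)).mp hZIco j
        (Finset.mem_Ico.mpr ⟨hkj, hjN⟩)
    · have h1 := hmaj k hkN
      linarith [hYsplit ▸ hsum]
  have step1 : ∑ i ∈ range N, (Y i * Real.log (Y i) - Z i * Real.log (Z i)) ≤
      ∑ i ∈ range N, (-(1 + Real.log (Y i))) * (Z i - Y i) := by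
    apply Finset.sum_le_sum
    intro i hi
    rcases eq_or_lt_of_le (hY0 i) with h0 | hpos
    · have hZi : Z i = 0 :=
        (stepA i (le_of_lt (Finset.mem_range.mp hi)) h0.symm).1 i le_rfl
          (Finset.mem_range.mp hi)
      rw [← h0, hZi]; simp
    · exact gibbs_pt hpos (hZ0 i)
  have step2 : ∑ i ∈ range N, (-(1 + Real.log (Y i))) * (Z i - Y i) =
      ∑ i ∈ range N, (-Real.log (Y i)) * (Z i - Y i) := by
    have hd : ∑ i ∈ range N, (Z i - Y i) = 0 := by
      rw [Finset.sum_sub_distrib]; linarith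
    have : ∀ i, (-(1 + Real.log (Y i))) * (Z i - Y i)
        = (-Real.log (Y i)) * (Z i - Y i) + (-1) * (Z i - Y i) := by intro i; ring
    simp_rw [this, Finset.sum_add_distrib, ← Finset.mul_sum, hd]
    ring
  have step3 : ∑ i ∈ range N, (-Real.log (Y i)) * (Z i - Y i) ≤ 0 := by
    have habel := Finset.sum_range_by_parts (fun i => -Real.log (Y i))
      (fun i => Z i - Y i) N
    simp only [smul_eq_mul] at habel
    have hDN : ∑ i ∈ range N, (Z i - Y i) = 0 := by
      rw [Finset.sum_sub_distrib]; linarith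
    rw [habel, hDN, mul_zero, zero_sub, neg_nonpos]
    apply Finset.sum_nonneg
    intro i hi
    have hi1N : i + 1 ≤ N := by
      have := Finset.mem_range.mp hi; omega
    have hD : 0 ≤ ∑ j ∈ range (i + 1), (Z j - Y j) := by
      rw [Finset.sum_sub_distrib, sub_nonneg]
      exact hmaj (i + 1) hi1N
    rcases eq_or_lt_of_le (hY0 (i + 1)) with h0 | hpos
    · have hDeq : ∑ j ∈ range (i + 1), (Z j - Y j) = 0 := by
        have := (stepA (i + 1) hi1N h0.symm).2
        rw [Finset.sum_sub_distrib]; linarith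
      rw [hDeq, mul_zero]
    · apply mul_nonneg _ hD
      have hYi : 0 < Y i := lt_of_lt_of_le hpos (hYa (Nat.le_succ i))
      have := Real.log_le_log hpos (hYa (Nat.le_succ i))
      linarith
  calc ∑ i ∈ range N, Y i * Real.log (Y i)
      = ∑ i ∈ range N, Z i * Real.log (Z i) +
        ∑ i ∈ range N, (Y i * Real.log (Y i) - Z i * Real.log (Z i)) := by
        rw [Finset.sum_sub_distrib]; ring
    _ ≤ ∑ i ∈ range N, Z i * Real.log (Z i) := by
        have := step1.trans (le_of_eq step2) |>.trans step3
        linarith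


/-- Comparison of direct-sum and direct-product bounds under the Shannon entropy:
if `x ∈ ℝ^{nm}` is a non-increasing probability vector, `y ∈ ℝ^{n+m}` is nonnegative,
non-increasing and sums to `2`, and `y ≺ (1) ⊕ x` (first-`k` partial sums of `y` are
bounded by those of the vector `(1, x_1, …, x_{nm})` for every `k`),
then `H(y) ≥ H(x)`. -/
theorem ds_vs_dp_entropy_comparison {n m : ℕ} (x : Fin (n * m) → ℝ)
    (hx0 : ∀ i, 0 ≤ x i) (hx1 : ∑ i, x i = 1) (hxa : Antitone x)
    (y : Fin (n + m) → ℝ)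
    (hy0 : ∀ i, 0 ≤ y i) (hy2 : ∑ i, y i = 2) (hya : Antitone y)
    (hmaj : ∀ k, partialSum y k ≤ partialSum (Fin.cons 1 x) k) :
    shannonH x ≤ shannonH y := by
  set N := max (n + m) (n * m + 1) with hN
  set z : Fin (n * m + 1) → ℝ := Fin.cons 1 x with hz
  have hz0 : ∀ j, 0 ≤ z j := by
    intro j
    refine Fin.cases ?_ ?_ j
    · simp [hz]
    · intro i; simpa [hz] using hx0 i
  have hY0 : ∀ i, 0 ≤ extv y i := by
    intro i; unfold extv; split
    · exact hy0 _
    · exact le_refl 0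
  have hZ0 : ∀ i, 0 ≤ extv z i := by
    intro i; unfold extv; split
    · exact hz0 _
    · exact le_refl 0
  have hYa : Antitone (extv y) := by
    intro i j hij
    unfold extv
    by_cases hj : j < n + m
    · have hi : i < n + m := lt_of_le_of_lt hij hj
      rw [dif_pos hi, dif_pos hj]
      exact hya (show (⟨i, hi⟩ : Fin (n + m)) ≤ ⟨j, hj⟩ from hij)
    · rw [dif_neg hj]
      exact hY0 i
  have hle1 : n + m ≤ N := le_max_left _ _
  have hle2 : n * m + 1 ≤ N := le_max_right _ _
  have hsumY : ∑ i ∈ range N, extv y i = 2 := by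
    unfold extv; rw [dsum N hle1 y]; exact hy2
  have hsumZ : ∑ i ∈ range N, extv z i = 2 := by
    unfold extv; rw [dsum N hle2 z]
    rw [hz, Fin.sum_cons, hx1]; norm_num
  have hkey := key N (extv y) (extv z) hY0 hZ0 hYa
    (fun k _ => by rw [extsum, extsum]; exact hmaj k)
    (by rw [hsumY, hsumZ])
  have eY : ∑ i ∈ range N, extv y i * Real.log (extv y i)
      = ∑ j, y j * Real.log (y j) := by
    rw [← dsum N hle1 (fun j => y j * Real.log (y j))]
    apply Finset.sum_congr rfl
    intro i _
    unfold extv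
    by_cases h : i < n + m
    · rw [dif_pos h, dif_pos h]
    · rw [dif_neg h, dif_neg h]; simp
  have eZ : ∑ i ∈ range N, extv z i * Real.log (extv z i)
      = ∑ j, z j * Real.log (z j) := by
    rw [← dsum N hle2 (fun j => z j * Real.log (z j))]
    apply Finset.sum_congr rfl
    intro i _
    unfold extv
    by_cases h : i < n * m + 1
    · rw [dif_pos h, dif_pos h]
    · rw [dif_neg h, dif_neg h]; simp
  have eZ2 : ∑ j, z j * Real.log (z j) = ∑ j, x j * Real.log (x j) := by
    rw [hz, Fin.sum_univ_succ]
    simp [Fin.cons_zero, Fin.cons_succ]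
  rw [eY, eZ, eZ2] at hkey
  unfold shannonH
  linarith
end
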